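/- Fix integers r ≥ 1 and q with 2 ≤ q ≤ r+1. There is a constant C (depending only on q and r) such that for all integers g ≥ 2, the sum over all tuples ((g₁,n₁),…,(g_q,n_q)) of pairs of nonnegative integers satisfying 2gᵢ + nᵢ ≥ 3 for each i, ∑gᵢ = g + q − r − 1, and ∑nᵢ = 2r, of the product ∏_{i: g_i ≥ 2} (gᵢ−1)^{2gᵢ−3+nᵢ}, divided by (g−1)^{2g−3}, is at most C·g^{1−q}. -/

import Mathlib

/-!
Write `eⱼ = 2gⱼ - 3 + nⱼ` for the exponent of the piece `(gⱼ, nⱼ)` (and `eⱼ = 0` when `gⱼ ≤ 1`).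
Since every piece has `2gⱼ + nⱼ ≥ 3`, the exponents satisfy `∑ eⱼ ≤ (2g - 3) - (q - 1)`.
Fix a piece `i` of maximal genus; every other piece has `gⱼ ≤ g / 2`, so its factor is at most
`(g - 1)^{eⱼ}` times `2 · 2^{-gⱼ}`. Hence each term is at most
`2^{q-1} (g - 1)^{2g-3} (g - 1)^{1-q} ∑ᵢ ∏_{j ≠ i} 2^{-gⱼ}`. As the totals `∑ gⱼ` and `∑ nⱼ` are
fixed, a tuple is determined by its entries off `i`, so the sum of `∏_{j ≠ i} 2^{-gⱼ}` over all
tuples is bounded by a product of geometric series, uniformly in `g`.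
-/

open Finset

section

variable {ι : Type*} [Fintype ι]

theorem eq_of_update_eq_of_sum_eq [DecidableEq ι] {M : Type*} [AddCancelCommMonoid M]
    {f f' : ι → M} {i : ι} {c : M} (h : Function.update f i c = Function.update f' i c)
    (hsum : ∑ j, f j = ∑ j, f' j) : f = f' := by
  have hoff : ∀ k ≠ i, f k = f' k := fun k hk => by
    simpa [Function.update_of_ne hk] using congrFun h k
  funext j
  by_cases hj : j = i
  · subst hj
    have hrest : ∑ k ∈ univ.erase j, f k = ∑ k ∈ univ.erase j, f' k :=
      sum_congr rfl fun k hk => hoff k (ne_of_mem_erase hk)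
    rw [← add_sum_erase univ f (mem_univ j), ← add_sum_erase univ f' (mem_univ j), hrest] at hsum
    exact add_right_cancel hsum
  · exact hoff j hj

theorem sum_prod_half_pow_le [DecidableEq ι] (A : Finset (ι → ℕ × ℕ)) (m : ℕ)
    (hA : ∀ z ∈ A, ∀ j, (z j).2 ≤ m) :
    ∑ z ∈ A, ∏ j, (1 / 2 : ℝ) ^ (z j).1 ≤ (2 * (m + 1)) ^ Fintype.card ι := by
  set N := A.sup fun z => univ.sup fun j => (z j).1
  set B := range (N + 1) ×ˢ range (m + 1)
  have hAB : A ⊆ Fintype.piFinset fun _ => B := fun z hz => by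
    refine Fintype.mem_piFinset.2 fun j => mem_product.2 ⟨mem_range.2 ?_, mem_range.2 ?_⟩
    · exact Nat.lt_succ_of_le <| (le_sup (f := fun j => (z j).1) (mem_univ j)).trans
        (le_sup (f := fun z => univ.sup fun j => (z j).1) hz)
    · exact Nat.lt_succ_of_le (hA z hz j)
  have hB : ∑ y ∈ B, (1 / 2 : ℝ) ^ y.1 ≤ 2 * (m + 1) := by
    simp only [B, sum_product, sum_const, card_range, nsmul_eq_mul, ← mul_sum]
    push_cast
    rw [mul_comm 2]
    exact mul_le_mul_of_nonneg_left (sum_geometric_two_le _) (by positivity)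
  calc ∑ z ∈ A, ∏ j, (1 / 2 : ℝ) ^ (z j).1
      ≤ ∑ z ∈ Fintype.piFinset fun _ => B, ∏ j, (1 / 2 : ℝ) ^ (z j).1 :=
        sum_le_sum_of_subset_of_nonneg hAB fun _ _ _ => by positivity
    _ = (∑ y ∈ B, (1 / 2 : ℝ) ^ y.1) ^ Fintype.card ι := by
        rw [← prod_univ_sum (fun _ => B) fun _ y => (1 / 2 : ℝ) ^ y.1, prod_const, card_univ]
    _ ≤ (2 * (m + 1)) ^ Fintype.card ι := pow_le_pow_left₀ (by positivity) hB _

theorem sum_prod_erase_half_pow_le [DecidableEq ι] (A : Finset (ι → ℕ × ℕ)) (i : ι) (s : ℕ × ℕ)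
    (hA : ∀ z ∈ A, ∑ j, z j = s) :
    ∑ z ∈ A, ∏ j ∈ univ.erase i, (1 / 2 : ℝ) ^ (z j).1 ≤ (2 * (s.2 + 1)) ^ Fintype.card ι := by
  have hinj : Set.InjOn (fun z => Function.update z i 0) A := fun z hz z' hz' h =>
    eq_of_update_eq_of_sum_eq h ((hA z hz).trans (hA z' hz').symm)
  have hforget : ∀ z : ι → ℕ × ℕ, ∏ j ∈ univ.erase i, (1 / 2 : ℝ) ^ (z j).1 =
      ∏ j, (1 / 2 : ℝ) ^ (Function.update z i 0 j).1 := fun z => by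
    rw [← mul_prod_erase univ _ (mem_univ i), Function.update_self]
    simp only [Prod.fst_zero, pow_zero, one_mul]
    exact prod_congr rfl fun j hj => by rw [Function.update_of_ne (ne_of_mem_erase hj)]
  rw [sum_congr rfl fun z _ => hforget z,
    ← sum_image (f := fun z => ∏ j, (1 / 2 : ℝ) ^ (z j).1) hinj]
  refine sum_prod_half_pow_le _ _ ?_
  simp only [mem_image]
  rintro _ ⟨z, hz, rfl⟩ j
  calc (Function.update z i 0 j).2 ≤ (z j).2 := by
        rcases eq_or_ne j i with rfl | hj
        · simp
        · rw [Function.update_of_ne hj]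
    _ ≤ (∑ k, z k).2 := (single_le_sum_of_canonicallyOrdered (mem_univ j) : z j ≤ ∑ k, z k).2
    _ = s.2 := by rw [hA z hz]

def weightExponent (p : ℕ × ℕ) : ℕ := if 2 ≤ p.1 then 2 * p.1 - 3 + p.2 else 0

theorem ite_eq_pow_weightExponent (p : ℕ × ℕ) :
    (if 2 ≤ p.1 then ((p.1 : ℝ) - 1) ^ (2 * p.1 - 3 + p.2) else 1) =
      ((p.1 : ℝ) - 1) ^ weightExponent p := by
  rw [weightExponent, pow_ite, pow_zero]

theorem weightExponent_add_three_le {p : ℕ × ℕ} (hp : 3 ≤ 2 * p.1 + p.2) :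
    weightExponent p + 3 ≤ 2 * p.1 + p.2 := by
  unfold weightExponent
  split_ifs <;> omega

theorem pow_weightExponent_nonneg (p : ℕ × ℕ) : 0 ≤ ((p.1 : ℝ) - 1) ^ weightExponent p := by
  unfold weightExponent
  split_ifs with h
  · have : (2 : ℝ) ≤ p.1 := by exact_mod_cast h
    exact pow_nonneg (by linarith) _
  · simp

theorem pow_weightExponent_le {p : ℕ × ℕ} {G : ℝ} (hp : (p.1 : ℝ) ≤ G) :
    ((p.1 : ℝ) - 1) ^ weightExponent p ≤ (G - 1) ^ weightExponent p := by
  unfold weightExponent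
  split_ifs with h
  · have : (2 : ℝ) ≤ p.1 := by exact_mod_cast h
    exact pow_le_pow_left₀ (by linarith) (by linarith) _
  · simp

theorem pow_weightExponent_le_of_two_mul_le {p : ℕ × ℕ} {G : ℝ} (hp : 2 * (p.1 : ℝ) ≤ G) :
    ((p.1 : ℝ) - 1) ^ weightExponent p ≤ 2 * (1 / 2) ^ p.1 * (G - 1) ^ weightExponent p := by
  unfold weightExponent
  split_ifs with h
  · have h' : (2 : ℝ) ≤ p.1 := by exact_mod_cast h
    have he : p.1 - 1 ≤ 2 * p.1 - 3 + p.2 := by omega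
    have hhalf : (1 / 2 : ℝ) ^ p.1 = (1 / 2) ^ (p.1 - 1) * (1 / 2) := by
      rw [← pow_succ, Nat.sub_add_cancel (by omega)]
    calc ((p.1 : ℝ) - 1) ^ (2 * p.1 - 3 + p.2)
        ≤ (1 / 2 * (G - 1)) ^ (2 * p.1 - 3 + p.2) :=
          pow_le_pow_left₀ (by linarith) (by linarith) _
      _ = (1 / 2) ^ (2 * p.1 - 3 + p.2) * (G - 1) ^ (2 * p.1 - 3 + p.2) := mul_pow _ _ _
      _ ≤ (1 / 2) ^ (p.1 - 1) * (G - 1) ^ (2 * p.1 - 3 + p.2) :=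
          mul_le_mul_of_nonneg_right (pow_le_pow_of_le_one (by norm_num) (by norm_num) he)
            (pow_nonneg (by linarith) _)
      _ = 2 * (1 / 2) ^ p.1 * (G - 1) ^ (2 * p.1 - 3 + p.2) := by
          rw [hhalf]
          ring
  · have : p.1 ≤ 1 := by omega
    interval_cases p.1 <;> norm_num

theorem sum_weightExponent_add_le (f : ι → ℕ × ℕ) (hf : ∀ j, 3 ≤ 2 * (f j).1 + (f j).2) :
    ∑ j, weightExponent (f j) + 3 * Fintype.card ι ≤ 2 * ∑ j, (f j).1 + ∑ j, (f j).2 := by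
  calc ∑ j, weightExponent (f j) + 3 * Fintype.card ι = ∑ j, (weightExponent (f j) + 3) := by
        rw [sum_add_distrib, sum_const, card_univ, smul_eq_mul, mul_comm]
    _ ≤ ∑ j, (2 * (f j).1 + (f j).2) := sum_le_sum fun j _ => weightExponent_add_three_le (hf j)
    _ = 2 * ∑ j, (f j).1 + ∑ j, (f j).2 := by rw [sum_add_distrib, mul_sum]

theorem prod_pow_weightExponent_le [DecidableEq ι] [Nonempty ι] (f : ι → ℕ × ℕ) {G : ℕ}
    (hG : 1 ≤ G) (hfG : ∑ j, (f j).1 ≤ G) :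
    ∏ j, (((f j).1 : ℝ) - 1) ^ weightExponent (f j) ≤
      2 ^ (Fintype.card ι - 1) * ((G : ℝ) - 1) ^ (∑ j, weightExponent (f j)) *
        ∑ i, ∏ j ∈ univ.erase i, (1 / 2 : ℝ) ^ (f j).1 := by
  obtain ⟨i, -, hmax⟩ := exists_max_image univ (fun j => (f j).1) univ_nonempty
  have hle : ∀ j, ((f j).1 : ℝ) ≤ G := fun j => by
    exact_mod_cast
      (single_le_sum_of_canonicallyOrdered (f := fun j => (f j).1) (mem_univ j)).trans hfG
  have hhalf : ∀ j ≠ i, 2 * ((f j).1 : ℝ) ≤ G := fun j hj => by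
    have := add_le_sum (f := fun j => (f j).1) (fun _ _ => Nat.zero_le _) (mem_univ j)
      (mem_univ i) hj
    have := hmax j (mem_univ j)
    exact_mod_cast (by omega : 2 * (f j).1 ≤ G)
  have hG1 : (0 : ℝ) ≤ G - 1 := by
    rw [sub_nonneg]
    exact_mod_cast hG
  calc ∏ j, (((f j).1 : ℝ) - 1) ^ weightExponent (f j)
      = (((f i).1 : ℝ) - 1) ^ weightExponent (f i) *
          ∏ j ∈ univ.erase i, (((f j).1 : ℝ) - 1) ^ weightExponent (f j) :=
        (mul_prod_erase _ _ (mem_univ i)).symm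
    _ ≤ ((G : ℝ) - 1) ^ weightExponent (f i) *
          ∏ j ∈ univ.erase i, (2 * (1 / 2) ^ (f j).1 * ((G : ℝ) - 1) ^ weightExponent (f j)) :=
        mul_le_mul (pow_weightExponent_le (hle i))
          (prod_le_prod (fun j _ => pow_weightExponent_nonneg _)
            fun j hj => pow_weightExponent_le_of_two_mul_le (hhalf j (ne_of_mem_erase hj)))
          (prod_nonneg fun j _ => pow_weightExponent_nonneg _) (pow_nonneg hG1 _)
    _ = 2 ^ (Fintype.card ι - 1) * ((G : ℝ) - 1) ^ (∑ j, weightExponent (f j)) *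
          ∏ j ∈ univ.erase i, (1 / 2 : ℝ) ^ (f j).1 := by
        rw [prod_mul_distrib, prod_mul_distrib, prod_const, card_erase_of_mem (mem_univ i),
          card_univ, ← prod_pow_eq_pow_sum, ← mul_prod_erase univ _ (mem_univ i)]
        ring
    _ ≤ 2 ^ (Fintype.card ι - 1) * ((G : ℝ) - 1) ^ (∑ j, weightExponent (f j)) *
          ∑ i, ∏ j ∈ univ.erase i, (1 / 2 : ℝ) ^ (f j).1 :=
        mul_le_mul_of_nonneg_left
          (single_le_sum (f := fun i => ∏ j ∈ univ.erase i, (1 / 2 : ℝ) ^ (f j).1)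
            (fun _ _ => by positivity) (mem_univ i))
          (by positivity)

end

noncomputable def signatureWeight {q : ℕ} (f : Fin q → ℕ × ℕ) : ℝ :=
  ∏ i, if 2 ≤ (f i).1 then ((f i).1 - 1 : ℝ) ^ (2 * (f i).1 - 3 + (f i).2) else 1

theorem signatureWeight_nonneg {q : ℕ} (f : Fin q → ℕ × ℕ) : 0 ≤ signatureWeight f :=
  prod_nonneg fun i _ => by
    rw [ite_eq_pow_weightExponent]
    exact pow_weightExponent_nonneg _

def IsAdmissible (r q g : ℕ) (f : Fin q → ℕ × ℕ) : Prop :=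
  (∀ i, 3 ≤ 2 * (f i).1 + (f i).2) ∧ (∑ i, (f i).1) + r + 1 = g + q ∧ (∑ i, (f i).2) = 2 * r

instance (r q g : ℕ) : DecidablePred (IsAdmissible r q g) :=
  fun _ => inferInstanceAs (Decidable (_ ∧ _ ∧ _))

def admissible (r q g : ℕ) : Finset (Fin q → ℕ × ℕ) :=
  {f ∈ Fintype.piFinset fun _ => range (g + q) ×ˢ range (2 * r + 1) | IsAdmissible r q g f}

theorem mem_admissible {r q g : ℕ} {f : Fin q → ℕ × ℕ} :
    f ∈ admissible r q g ↔ IsAdmissible r q g f := by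
  refine ⟨fun hf => (mem_filter.1 hf).2, fun hf => mem_filter.2 ⟨?_, hf⟩⟩
  refine Fintype.mem_piFinset.2 fun j => mem_product.2 ⟨mem_range.2 ?_, mem_range.2 ?_⟩
  · have := single_le_sum_of_canonicallyOrdered (f := fun i => (f i).1) (mem_univ j)
    have := hf.2.1
    omega
  · have := single_le_sum_of_canonicallyOrdered (f := fun i => (f i).2) (mem_univ j)
    have := hf.2.2
    omega

theorem tsum_isAdmissible (r q g : ℕ) (F : (Fin q → ℕ × ℕ) → ℝ) :
    ∑' f : {f // IsAdmissible r q g f}, F f = ∑ f ∈ admissible r q g, F f := by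
  rw [← Finset.tsum_subtype]
  exact ((Equiv.subtypeEquivRight fun _ => mem_admissible).tsum_eq
    fun f : {f // IsAdmissible r q g f} => F f).symm

theorem sum_admissible_sum_prod_erase_le (r q g : ℕ) :
    ∑ f ∈ admissible r q g, ∑ i, ∏ j ∈ univ.erase i, (1 / 2 : ℝ) ^ (f j).1 ≤
      q * (2 * (2 * r + 1)) ^ q := by
  have hsum : ∀ f ∈ admissible r q g, ∑ j, f j = (g + q - (r + 1), 2 * r) := fun f hf => by
    obtain ⟨-, h1, h2⟩ := mem_admissible.1 hf
    ext
    · rw [Prod.fst_sum]; omega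
    · rw [Prod.snd_sum, h2]
  rw [sum_comm]
  calc ∑ i, ∑ f ∈ admissible r q g, ∏ j ∈ univ.erase i, (1 / 2 : ℝ) ^ (f j).1
      ≤ ∑ _i : Fin q, (2 * (2 * r + 1) : ℝ) ^ q := sum_le_sum fun i _ => by
        simpa using sum_prod_erase_half_pow_le _ i _ hsum
    _ = q * (2 * (2 * r + 1)) ^ q := by simp

theorem admissible_prod_mul_pow_le {r q g : ℕ} (hq : 1 ≤ q) (hqr : q ≤ r + 1) (hg : 2 ≤ g)
    {f : Fin q → ℕ × ℕ} (hf : IsAdmissible r q g f) :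
    signatureWeight f * ((g : ℝ) - 1) ^ (q - 1) ≤
      2 ^ (q - 1) * ((g : ℝ) - 1) ^ (2 * g - 3) *
        ∑ i, ∏ j ∈ univ.erase i, (1 / 2 : ℝ) ^ (f j).1 := by
  obtain ⟨h3, hgsum, hnsum⟩ := hf
  have : Nonempty (Fin q) := ⟨⟨0, hq⟩⟩
  have hexp := sum_weightExponent_add_le f h3
  have hprod := prod_pow_weightExponent_le f (G := g) (by omega) (by omega)
  rw [Fintype.card_fin] at hexp hprod
  have hg1 : (1 : ℝ) ≤ g - 1 := by
    rw [le_sub_iff_add_le]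
    exact_mod_cast hg
  simp only [signatureWeight, ite_eq_pow_weightExponent]
  calc (∏ i, (((f i).1 : ℝ) - 1) ^ weightExponent (f i)) * ((g : ℝ) - 1) ^ (q - 1)
      ≤ 2 ^ (q - 1) * ((g : ℝ) - 1) ^ (∑ j, weightExponent (f j)) *
          (∑ i, ∏ j ∈ univ.erase i, (1 / 2 : ℝ) ^ (f j).1) * ((g : ℝ) - 1) ^ (q - 1) :=
        mul_le_mul_of_nonneg_right hprod (by positivity)
    _ = 2 ^ (q - 1) * ((g : ℝ) - 1) ^ (∑ j, weightExponent (f j) + (q - 1)) *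
          ∑ i, ∏ j ∈ univ.erase i, (1 / 2 : ℝ) ^ (f j).1 := by
        rw [pow_add]
        ring
    _ ≤ 2 ^ (q - 1) * ((g : ℝ) - 1) ^ (2 * g - 3) *
          ∑ i, ∏ j ∈ univ.erase i, (1 / 2 : ℝ) ^ (f j).1 := by
        gcongr
        omega

theorem sum_admissible_signatureWeight_mul_pow_le {r q g : ℕ} (hq : 1 ≤ q) (hqr : q ≤ r + 1)
    (hg : 2 ≤ g) :
    (∑ f ∈ admissible r q g, signatureWeight f) * ((g : ℝ) - 1) ^ (q - 1) ≤
      2 ^ (q - 1) * ((g : ℝ) - 1) ^ (2 * g - 3) * (q * (2 * (2 * r + 1)) ^ q) :=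
  calc (∑ f ∈ admissible r q g, signatureWeight f) * ((g : ℝ) - 1) ^ (q - 1)
      = ∑ f ∈ admissible r q g, signatureWeight f * ((g : ℝ) - 1) ^ (q - 1) := sum_mul _ _ _
    _ ≤ ∑ f ∈ admissible r q g, 2 ^ (q - 1) * ((g : ℝ) - 1) ^ (2 * g - 3) *
          ∑ i, ∏ j ∈ univ.erase i, (1 / 2 : ℝ) ^ (f j).1 :=
        sum_le_sum fun f hf => admissible_prod_mul_pow_le hq hqr hg (mem_admissible.1 hf)
    _ ≤ 2 ^ (q - 1) * ((g : ℝ) - 1) ^ (2 * g - 3) * (q * (2 * (2 * r + 1)) ^ q) := by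
        rw [← mul_sum]
        refine mul_le_mul_of_nonneg_left (sum_admissible_sum_prod_erase_le r q g) ?_
        have : (0 : ℝ) ≤ g - 1 := by
          rw [sub_nonneg]
          exact_mod_cast one_le_two.trans hg
        positivity

theorem stmt_18_general (r q : ℕ) (hq : 2 ≤ q) (hqr : q ≤ r + 1) :
    ∃ C : ℝ, 0 < C ∧ ∀ g : ℕ, 2 ≤ g →
      (∑' f : {f : Fin q → ℕ × ℕ //
          (∀ i, 3 ≤ 2 * (f i).1 + (f i).2) ∧
          (∑ i, (f i).1) + r + 1 = g + q ∧
          (∑ i, (f i).2) = 2 * r},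
        (∏ i : Fin q, if 2 ≤ (f.1 i).1 then
            ((f.1 i).1 - 1 : ℝ) ^ (2 * (f.1 i).1 - 3 + (f.1 i).2) else 1)) /
        ((g : ℝ) - 1) ^ (2 * g - 3)
      ≤ C * (g : ℝ) ^ ((1 : ℤ) - q) := by
  refine ⟨2 ^ (q - 1) * 2 ^ (q - 1) * (q * (2 * (2 * r + 1)) ^ q), by positivity, fun g hg => ?_⟩
  have hg1 : (1 : ℝ) ≤ g - 1 := by
    rw [le_sub_iff_add_le]
    exact_mod_cast hg
  have hpow : (g : ℝ) ^ (q - 1) ≤ 2 ^ (q - 1) * ((g : ℝ) - 1) ^ (q - 1) := by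
    rw [← mul_pow]
    exact pow_le_pow_left₀ (by positivity) (by linarith) _
  have hzpow : (g : ℝ) ^ ((1 : ℤ) - q) = ((g : ℝ) ^ (q - 1))⁻¹ := by
    rw [← zpow_natCast, ← zpow_neg]
    congr 1
    omega
  erw [tsum_isAdmissible r q g signatureWeight]
  set T := ∑ f ∈ admissible r q g, signatureWeight f
  have hT0 : 0 ≤ T := sum_nonneg fun f _ => signatureWeight_nonneg f
  have hT := sum_admissible_signatureWeight_mul_pow_le (by omega) hqr hg
  have hD : (0 : ℝ) < ((g : ℝ) - 1) ^ (2 * g - 3) := pow_pos (by linarith) _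
  rw [hzpow, div_le_iff₀ hD, mul_right_comm, ← div_eq_mul_inv, le_div_iff₀ (by positivity)]
  calc T * (g : ℝ) ^ (q - 1) ≤ T * (2 ^ (q - 1) * ((g : ℝ) - 1) ^ (q - 1)) := by gcongr
    _ = 2 ^ (q - 1) * (T * ((g : ℝ) - 1) ^ (q - 1)) := by ring
    _ ≤ 2 ^ (q - 1) *
          (2 ^ (q - 1) * ((g : ℝ) - 1) ^ (2 * g - 3) * (q * (2 * (2 * r + 1)) ^ q)) := by
        gcongr
    _ = _ := by ring

/-- Key combinatorial estimate for separating multicurves: for fixed `r ≥ 1` and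
`2 ≤ q ≤ r+1`, there is a constant `C` such that for all `g ≥ 2`, the sum over all
tuples `((g₁,n₁),…,(g_q,n_q))` with `2gᵢ+nᵢ ≥ 3`, `∑gᵢ = g+q−r−1`, `∑nᵢ = 2r` of
`∏_{i : gᵢ ≥ 2} (gᵢ−1)^{2gᵢ−3+nᵢ}`, divided by `(g−1)^{2g−3}`, is at most `C·g^{1−q}`. -/
theorem stmt_18 (r q : ℕ) (hr : 1 ≤ r) (hq : 2 ≤ q) (hqr : q ≤ r + 1) :
    ∃ C : ℝ, 0 < C ∧ ∀ g : ℕ, 2 ≤ g →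
      (∑' f : {f : Fin q → ℕ × ℕ //
          (∀ i, 3 ≤ 2 * (f i).1 + (f i).2) ∧
          (∑ i, (f i).1) + r + 1 = g + q ∧
          (∑ i, (f i).2) = 2 * r},
        (∏ i : Fin q, if 2 ≤ (f.1 i).1 then
            ((f.1 i).1 - 1 : ℝ) ^ (2 * (f.1 i).1 - 3 + (f.1 i).2) else 1)) /
        ((g : ℝ) - 1) ^ (2 * g - 3)
      ≤ C * (g : ℝ) ^ ((1 : ℤ) - q) :=
  stmt_18_general r q hq hqr
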